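/- Example 2.2 (i): Let X = [0,1], m = 2, f_0(x) = x²/2 and f_1(x) = (x + 1)/2, and let G be the unique continuous solution of de Rham's equation. Then α = ∫₀¹ −log_2 |f′_{A_1(t)}(G(Ht))| dt = +∞ (in particular α > 1), and consequently G′(t) = 0 for Lebesgue-a.e. t ∈ (0,1). -/

import Mathlib

open MeasureTheory Filter Set Topology
open scoped ENNReal

noncomputable section

/-- The first digit `A₁(t) = ⌊m t⌋` of the `m`-adic expansion of `t ∈ [0,1)`. -/
def A1 (m : ℕ) (t : ℝ) : ℕ := (⌊(m : ℝ) * t⌋).toNat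

/-- The shift map `Ht = m t - ⌊m t⌋` on `[0,1)`. -/
def Hmap (m : ℕ) (t : ℝ) : ℝ := (m : ℝ) * t - ⌊(m : ℝ) * t⌋

/-- `-log_m x` as a value in `[0,∞]`, with the convention `-log_m 0 = +∞`. -/
def negLogbE (m : ℕ) (x : ℝ) : ℝ≥0∞ :=
  if x = 0 then ⊤ else ENNReal.ofReal (-Real.logb m x)

/-- The maps `f₀(x) = x²/2` and `f₁(x) = (x+1)/2` of Example 2.2 (i). -/
def fEx (i : ℕ) (x : ℝ) : ℝ := if i = 0 then x ^ 2 / 2 else (x + 1) / 2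

/-- `α = ∫₀¹ -log₂ |f'_{A₁(t)}(G(Ht))| dt ∈ [0,∞]`, with the convention `-log₂ 0 = +∞`. -/
def alphaEx (G : ℝ → ℝ) : ℝ≥0∞ :=
  ∫⁻ t in Set.Ico (0 : ℝ) 1, negLogbE 2 |deriv (fEx (A1 2 t)) (G (Hmap 2 t))|

end

/-!
Both branches of the equation are increasing and agree at `1/2`, so doubling the gap between two
points until they fall on opposite sides of `1/2` shows that `G` is monotone, hence
differentiable almost everywhere.

Near `0` the function `G/2` squares whenever its argument halves, so `G ≤ 2^(1 - 2ⁿ)` on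
`[0, 2⁻ⁿ]`; the integrand of `α` is therefore at least `1/(8t)` on `(0, 1/4)`, and `α = ∞`.

On every dyadic interval `[k, k + 1/2]·2⁻ⁿ` the increment of `G` over the first quarter is at most
a quarter of the whole: this holds on `[0, 1/2]`, the squaring branch only shrinks the ratio and
the affine branch keeps it. Every real number has infinitely many binary digits `0`, so the
difference quotients of `G` over the dyadic intervals shrinking to `t` infinitely often jump by a
factor `≤ 1/2` or `≥ 3/2`; at a point of differentiability this forces `G'(t) = 0`.
-/

theorem HasDerivAt.exists_forall_abs_sub_sub_mul_le {f : ℝ → ℝ} {f' x ε : ℝ}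
    (hf : HasDerivAt f f' x) (hε : 0 < ε) :
    ∃ δ > 0, ∀ a b, a ≤ x → x ≤ b → b - a < δ →
      |f b - f a - (b - a) * f'| ≤ ε * (b - a) := by
  obtain ⟨δ, hδ, hnear⟩ := Metric.eventually_nhds_iff.1 ((hasDerivAt_iff_isLittleO.1 hf).def hε)
  refine ⟨δ, hδ, fun a b hax hxb hab => ?_⟩
  have hnear' : ∀ y, |y - x| < δ → |f y - f x - (y - x) * f'| ≤ ε * |y - x| := by
    simpa [Real.dist_eq, Real.norm_eq_abs] using fun y => @hnear y
  have ha := hnear' a (by rw [abs_of_nonpos (by linarith)]; linarith)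
  have hb := hnear' b (by rw [abs_of_nonneg (by linarith)]; linarith)
  rw [abs_of_nonpos (by linarith : a - x ≤ 0)] at ha
  rw [abs_of_nonneg (by linarith : 0 ≤ b - x)] at hb
  calc |f b - f a - (b - a) * f'|
      = |(f b - f x - (b - x) * f') - (f a - f x - (a - x) * f')| := by ring_nf
    _ ≤ |f b - f x - (b - x) * f'| + |f a - f x - (a - x) * f'| := abs_sub _ _
    _ ≤ ε * (b - a) := by linarith

theorem frequently_fract_two_pow_mul_lt_half (y : ℝ) :
    ∃ᶠ n in atTop, Int.fract ((2 : ℝ) ^ n * y) < 1 / 2 := by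
  rw [Filter.frequently_atTop]
  intro N
  by_contra! hge
  have hdouble : ∀ j, 1 - Int.fract ((2 : ℝ) ^ (N + j) * y) =
      2 ^ j * (1 - Int.fract ((2 : ℝ) ^ N * y)) := by
    intro j
    induction j with
    | zero => simp
    | succ j ih =>
      set z := (2 : ℝ) ^ (N + j) * y
      have hfract : Int.fract (2 * z) = 2 * Int.fract z - 1 := by
        have hz := hge (N + j) (by omega)
        rw [Int.fract_eq_iff]
        refine ⟨by linarith, by linarith [Int.fract_lt_one z], 2 * ⌊z⌋ + 1, ?_⟩
        push_cast
        linarith [Int.floor_add_fract z]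
      rw [show (2 : ℝ) ^ (N + (j + 1)) * y = 2 * z by ring, hfract, pow_succ]
      linear_combination 2 * ih
  have hpos : 0 < 1 - Int.fract ((2 : ℝ) ^ N * y) := sub_pos.2 (Int.fract_lt_one _)
  obtain ⟨j, hj⟩ := pow_unbounded_of_one_lt (1 / (1 - Int.fract ((2 : ℝ) ^ N * y))) one_lt_two
  have hj' := hdouble j
  rw [div_lt_iff₀ hpos] at hj
  linarith [Int.fract_nonneg ((2 : ℝ) ^ (N + j) * y)]

theorem setLIntegral_ofReal_div_Ioo_eq_top {c a : ℝ} (hc : 0 < c) (ha : 0 < a) :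
    ∫⁻ t in Ioo 0 a, ENNReal.ofReal (c / t) = ⊤ := by
  by_contra hfin
  have hint : IntegrableOn (fun t : ℝ => c / t) (Ioo 0 a) :=
    (lintegral_ofReal_ne_top_iff_integrable
      (measurable_const.div measurable_id).aestronglyMeasurable
      ((ae_restrict_mem measurableSet_Ioo).mono fun t ht => div_nonneg hc.le ht.1.le)).1 hfin
  have hscaled : IntegrableOn (fun t : ℝ => c⁻¹ * (c / t)) (Ioo 0 a) := hint.const_mul c⁻¹
  have hrpow : IntegrableOn (fun t : ℝ => t ^ (-1 : ℝ)) (Ioo 0 a) :=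
    hscaled.congr_fun (fun t _ => by
      rw [Real.rpow_neg_one]; field_simp) measurableSet_Ioo
  exact lt_irrefl _ ((intervalIntegral.integrableOn_Ioo_rpow_iff ha).1 hrpow)

theorem natCast_le_negLogbE {m k : ℕ} (hm : 1 < m) {x : ℝ} (hx0 : 0 ≤ x)
    (hx : x ≤ ((m : ℝ) ^ k)⁻¹) : (k : ℝ≥0∞) ≤ negLogbE m x := by
  rcases hx0.eq_or_lt with rfl | hpos
  · simp [negLogbE]
  have hm' : (1 : ℝ) < m := by exact_mod_cast hm
  have hlog : Real.logb m x ≤ -k := by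
    calc Real.logb m x ≤ Real.logb m ((m : ℝ) ^ k)⁻¹ := Real.logb_le_logb_of_le hm' hpos hx
      _ = -k := by rw [Real.logb_inv, Real.logb_pow, Real.logb_self_eq_one hm', mul_one]
  rw [negLogbE, if_neg hpos.ne', ← ENNReal.ofReal_natCast]
  exact ENNReal.ofReal_le_ofReal (by linarith)

theorem monotoneOn_of_deRham {G f₀ f₁ : ℝ → ℝ} (hf₀ : MonotoneOn f₀ (Icc 0 1))
    (hf₁ : MonotoneOn f₁ (Icc 0 1)) (hf : f₀ 1 ≤ f₁ 0) (hGX : MapsTo G (Icc 0 1) (Icc 0 1))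
    (hL : ∀ t ∈ Icc (0 : ℝ) (1 / 2), G t = f₀ (G (2 * t)))
    (hR : ∀ t ∈ Icc (1 / 2 : ℝ) 1, G t = f₁ (G (2 * t - 1))) :
    MonotoneOn G (Icc 0 1) := by
  have hcross : ∀ x ∈ Icc (0 : ℝ) (1 / 2), ∀ y ∈ Icc (1 / 2 : ℝ) 1, G x ≤ G y := by
    rintro x ⟨hx0, hx1⟩ y ⟨hy0, hy1⟩
    have h2x := hGX (⟨by linarith, by linarith⟩ : 2 * x ∈ Icc (0 : ℝ) 1)
    have h2y := hGX (⟨by linarith, by linarith⟩ : 2 * y - 1 ∈ Icc (0 : ℝ) 1)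
    rw [hL x ⟨hx0, hx1⟩, hR y ⟨hy0, hy1⟩]
    calc f₀ (G (2 * x)) ≤ f₀ 1 := hf₀ h2x (right_mem_Icc.2 zero_le_one) h2x.2
      _ ≤ f₁ 0 := hf
      _ ≤ f₁ (G (2 * y - 1)) := hf₁ (left_mem_Icc.2 zero_le_one) h2y h2y.1
  have hgap : ∀ n : ℕ, ∀ x ∈ Icc (0 : ℝ) 1, ∀ y ∈ Icc (0 : ℝ) 1, x + (1 / 2) ^ n ≤ y →
      G x ≤ G y := by
    intro n
    induction n with
    | zero =>
      rintro x ⟨hx0, -⟩ y ⟨-, hy1⟩ hxy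
      exact hcross x ⟨hx0, by linarith⟩ y ⟨by linarith, hy1⟩
    | succ n ih =>
      rintro x ⟨hx0, hx1⟩ y ⟨hy0, hy1⟩ hxy
      have hpow : (1 / 2 : ℝ) ^ (n + 1) = (1 / 2) ^ n / 2 := by ring
      have hpos : (0 : ℝ) < (1 / 2) ^ n := by positivity
      rcases le_or_gt y (1 / 2) with hy | hy
      · rw [hL x ⟨hx0, by linarith⟩, hL y ⟨hy0, hy⟩]
        exact hf₀ (hGX ⟨by linarith, by linarith⟩) (hGX ⟨by linarith, by linarith⟩)
          (ih _ ⟨by linarith, by linarith⟩ _ ⟨by linarith, by linarith⟩ (by linarith))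
      rcases lt_or_ge x (1 / 2) with hx | hx
      · exact hcross x ⟨hx0, hx.le⟩ y ⟨hy.le, hy1⟩
      · rw [hR x ⟨hx, hx1⟩, hR y ⟨hy.le, hy1⟩]
        exact hf₁ (hGX ⟨by linarith, by linarith⟩) (hGX ⟨by linarith, by linarith⟩)
          (ih _ ⟨by linarith, by linarith⟩ _ ⟨by linarith, by linarith⟩ (by linarith))
  intro x hx y hy hxy
  rcases hxy.eq_or_lt with rfl | hlt
  · exact le_rfl
  obtain ⟨n, hn⟩ := exists_pow_lt_of_lt_one (sub_pos.2 hlt) (by norm_num : (1 / 2 : ℝ) < 1)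
  exact hgap n x hx y hy (by linarith)

noncomputable def dyadicPoint (n k : ℕ) (s : ℝ) : ℝ := (k + s) / 2 ^ n

theorem dyadicPoint_mem_Icc {n k : ℕ} (hk : k < 2 ^ n) {s : ℝ} (hs : s ∈ Icc (0 : ℝ) 1) :
    dyadicPoint n k s ∈ Icc (0 : ℝ) 1 := by
  have hk' : (k : ℝ) + 1 ≤ 2 ^ n := by exact_mod_cast hk
  unfold dyadicPoint
  exact ⟨by have := hs.1; positivity, (div_le_one (by positivity)).2 (by linarith [hs.2])⟩

theorem dyadicPoint_succ_le_half {n k : ℕ} (hk : k < 2 ^ n) {s : ℝ} (hs : s ≤ 1) :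
    dyadicPoint (n + 1) k s ≤ 1 / 2 := by
  have hk' : (k : ℝ) + 1 ≤ 2 ^ n := by exact_mod_cast hk
  rw [dyadicPoint, pow_succ, div_le_iff₀ (by positivity)]
  linarith

theorem half_le_dyadicPoint_succ (n k : ℕ) {s : ℝ} (hs : 0 ≤ s) :
    1 / 2 ≤ dyadicPoint (n + 1) (2 ^ n + k) s := by
  rw [dyadicPoint, pow_succ, le_div_iff₀ (by positivity)]
  push_cast
  nlinarith [(Nat.cast_nonneg k : (0 : ℝ) ≤ k)]

theorem two_mul_dyadicPoint_succ (n k : ℕ) (s : ℝ) :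
    2 * dyadicPoint (n + 1) k s = dyadicPoint n k s := by
  rw [dyadicPoint, dyadicPoint, pow_succ]
  field_simp

theorem two_mul_dyadicPoint_succ_sub_one (n k : ℕ) (s : ℝ) :
    2 * dyadicPoint (n + 1) (2 ^ n + k) s - 1 = dyadicPoint n k s := by
  rw [dyadicPoint, dyadicPoint, pow_succ]
  push_cast
  field_simp
  ring

theorem A1_two_of_lt_half {t : ℝ} (ht : t ∈ Ico (0 : ℝ) (1 / 2)) : A1 2 t = 0 := by
  rw [A1, Int.floor_eq_zero_iff.2 ⟨by push_cast; linarith [ht.1], by push_cast; linarith [ht.2]⟩]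
  rfl

theorem Hmap_two_of_lt_half {t : ℝ} (ht : t ∈ Ico (0 : ℝ) (1 / 2)) : Hmap 2 t = 2 * t := by
  rw [Hmap, Int.floor_eq_zero_iff.2 ⟨by push_cast; linarith [ht.1], by push_cast; linarith [ht.2]⟩]
  simp

theorem deriv_fEx_zero (x : ℝ) : deriv (fEx 0) x = x := by
  have hf : fEx 0 = fun y : ℝ => y ^ 2 / 2 := by funext y; simp [fEx]
  rw [hf]
  simp

section

variable {G : ℝ → ℝ}

theorem quarter_increment_le (hGX : MapsTo G (Icc 0 1) (Icc 0 1))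
    (hL : ∀ t ∈ Icc (0 : ℝ) (1 / 2), G t = G (2 * t) ^ 2 / 2)
    (hR : ∀ t ∈ Icc (1 / 2 : ℝ) 1, G t = (G (2 * t - 1) + 1) / 2) (hG1 : G 1 = 1)
    (hmono : MonotoneOn G (Icc 0 1)) (n k : ℕ) (hk : k < 2 ^ n) :
    G (dyadicPoint n k (1 / 4)) - G (dyadicPoint n k 0) ≤
      (G (dyadicPoint n k (1 / 2)) - G (dyadicPoint n k 0)) / 4 := by
  induction n generalizing k with
  | zero =>
    obtain rfl : k = 0 := by simpa using hk
    have hhalf : G (1 / 2) = 1 / 2 := by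
      rw [hL _ ⟨by norm_num, le_rfl⟩]; norm_num [hG1]
    have hquarter : G (1 / 4) = 1 / 8 := by
      rw [hL _ ⟨by norm_num, by norm_num⟩]; norm_num [hhalf]
    have h0 := (hGX (left_mem_Icc.2 zero_le_one)).1
    norm_num [dyadicPoint, hhalf, hquarter]
    linarith
  | succ n ih =>
    have hs : ∀ s ∈ ({0, 1 / 4, 1 / 2} : Set ℝ), s ∈ Icc (0 : ℝ) 1 := by
      rintro s (rfl | rfl | rfl) <;> norm_num
    rcases lt_or_ge k (2 ^ n) with hkn | hkn
    · have hleft : ∀ s ∈ ({0, 1 / 4, 1 / 2} : Set ℝ),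
          G (dyadicPoint (n + 1) k s) = G (dyadicPoint n k s) ^ 2 / 2 := fun s hs' => by
        rw [hL _ ⟨(dyadicPoint_mem_Icc hk (hs s hs')).1,
          dyadicPoint_succ_le_half hkn (hs s hs').2⟩, two_mul_dyadicPoint_succ]
      have hmem := fun s hs' => dyadicPoint_mem_Icc hkn (hs s hs')
      have huv := hmono (hmem 0 (by simp)) (hmem (1 / 4) (by simp))
        (by unfold dyadicPoint; gcongr; norm_num)
      have hvw := hmono (hmem (1 / 4) (by simp)) (hmem (1 / 2) (by simp))
        (by unfold dyadicPoint; gcongr; norm_num)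
      have hu := (hGX (hmem 0 (by simp))).1
      have hih := ih k hkn
      rw [hleft 0 (by simp), hleft (1 / 4) (by simp), hleft (1 / 2) (by simp)]
      nlinarith
    · obtain ⟨k, rfl⟩ := Nat.exists_eq_add_of_le hkn
      have hkn' : k < 2 ^ n := by rw [pow_succ] at hk; omega
      have hright : ∀ s ∈ ({0, 1 / 4, 1 / 2} : Set ℝ),
          G (dyadicPoint (n + 1) (2 ^ n + k) s) = (G (dyadicPoint n k s) + 1) / 2 :=
        fun s hs' => by
          rw [hR _ ⟨half_le_dyadicPoint_succ n k (hs s hs').1,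
            (dyadicPoint_mem_Icc hk (hs s hs')).2⟩, two_mul_dyadicPoint_succ_sub_one]
      have hih := ih k hkn'
      rw [hright 0 (by simp), hright (1 / 4) (by simp), hright (1 / 2) (by simp)]
      linarith

theorem hasDerivAt_eq_zero_of_quarter_increment_le (hmono : MonotoneOn G (Icc 0 1))
    (hquarter : ∀ n k : ℕ, k < 2 ^ n → G (dyadicPoint n k (1 / 4)) - G (dyadicPoint n k 0) ≤
      (G (dyadicPoint n k (1 / 2)) - G (dyadicPoint n k 0)) / 4)
    {t c : ℝ} (ht : t ∈ Ioo (0 : ℝ) 1) (hc : HasDerivAt G c t) : c = 0 := by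
  refine eq_of_forall_dist_le fun ε hε => ?_
  obtain ⟨δ, hδ, hslope⟩ := hc.exists_forall_abs_sub_sub_mul_le (by positivity : 0 < ε / 5)
  have hsmall : ∀ᶠ n : ℕ in atTop, (1 / 2 : ℝ) ^ n < δ :=
    (tendsto_pow_atTop_nhds_zero_of_lt_one (by norm_num) (by norm_num)).eventually
      (gt_mem_nhds hδ)
  obtain ⟨n, hfract, hn⟩ := ((frequently_fract_two_pow_mul_lt_half t).and_eventually hsmall).exists
  set φ := Int.fract ((2 : ℝ) ^ n * t)
  set k := ⌊(2 : ℝ) ^ n * t⌋₊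
  have ht0 : 0 ≤ (2 : ℝ) ^ n * t := by have := ht.1; positivity
  have hfloor : (k : ℝ) + φ = 2 ^ n * t := by
    have := Int.floor_add_fract ((2 : ℝ) ^ n * t)
    rwa [← Int.natCast_floor_eq_floor ht0, Int.cast_natCast] at this
  have hk : k < 2 ^ n := (Nat.floor_lt ht0).2 (by
    push_cast; nlinarith [ht.2, (by positivity : (0 : ℝ) < 2 ^ n)])
  set a := dyadicPoint n k 0
  set d := (1 / 2 : ℝ) ^ n / 4
  have hd : 0 < d := by positivity
  have hdδ : 4 * d < δ := by simp only [d]; linarith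
  have hpt : ∀ s, dyadicPoint n k s = a + s * (4 * d) := fun s => by
    simp only [a, d, dyadicPoint, one_div, inv_pow]; ring
  have hta : t = a + φ * (4 * d) := by
    rw [← hpt, dyadicPoint, hfloor]; field_simp
  have hφ : 0 ≤ φ := Int.fract_nonneg _
  have hΔ : G a ≤ G (a + 1 / 2 * (4 * d)) := by
    rw [← hpt]
    exact hmono (dyadicPoint_mem_Icc hk (by norm_num)) (dyadicPoint_mem_Icc hk (by norm_num))
      (by rw [hpt, hpt]; linarith)
  have hq : G (a + 1 / 4 * (4 * d)) - G a ≤ (G (a + 1 / 2 * (4 * d)) - G a) / 4 := by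
    rw [← hpt, ← hpt]; exact hquarter n k hk
  have hhalf := abs_le.1 <| hslope a (a + 1 / 2 * (4 * d)) (by nlinarith) (by nlinarith)
    (by linarith)
  rw [Real.dist_eq, sub_zero, abs_le]
  rcases le_or_gt φ (1 / 4) with hlow | hhigh
  · have hquart := abs_le.1 <| hslope a (a + 1 / 4 * (4 * d)) (by nlinarith) (by nlinarith)
      (by linarith)
    constructor <;> nlinarith
  · have hquart := abs_le.1 <| hslope (a + 1 / 4 * (4 * d)) (a + 1 / 2 * (4 * d)) (by nlinarith)
      (by nlinarith) (by linarith)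
    constructor <;> nlinarith

theorem ae_hasDerivWithinAt_zero_of_quarter_increment_le (hmono : MonotoneOn G (Icc 0 1))
    (hquarter : ∀ n k : ℕ, k < 2 ^ n → G (dyadicPoint n k (1 / 4)) - G (dyadicPoint n k 0) ≤
      (G (dyadicPoint n k (1 / 2)) - G (dyadicPoint n k 0)) / 4) :
    ∀ᵐ t ∂(volume.restrict (Ioo (0 : ℝ) 1)), HasDerivWithinAt G 0 (Icc 0 1) t := by
  filter_upwards [ae_restrict_of_ae hmono.ae_differentiableWithinAt_of_mem,
    ae_restrict_mem measurableSet_Ioo] with t hdiff ht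
  have hG := ((hdiff (Ioo_subset_Icc_self ht)).differentiableAt
    (Icc_mem_nhds ht.1 ht.2)).hasDerivAt
  rw [← hasDerivAt_eq_zero_of_quarter_increment_le hmono hquarter ht hG]
  exact hG.hasDerivWithinAt

theorem le_two_mul_half_pow_two_pow (hGX : MapsTo G (Icc 0 1) (Icc 0 1))
    (hL : ∀ t ∈ Icc (0 : ℝ) (1 / 2), G t = G (2 * t) ^ 2 / 2) (n : ℕ) :
    ∀ s ∈ Icc (0 : ℝ) ((1 / 2) ^ n), G s ≤ 2 * (1 / 2) ^ 2 ^ n := by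
  induction n with
  | zero =>
    intro s hs
    simp only [pow_zero, pow_one]
    linarith [(hGX (by simpa using hs)).2]
  | succ n ih =>
    rintro s ⟨hs0, hs1⟩
    have hpow : (1 / 2 : ℝ) ^ (n + 1) = (1 / 2) ^ n / 2 := by ring
    have hn1 : (1 / 2 : ℝ) ^ n ≤ 1 := pow_le_one₀ (by norm_num) (by norm_num)
    have h2s := ih (2 * s) ⟨by linarith, by linarith⟩
    have h2s0 := (hGX (⟨by linarith, by linarith⟩ : 2 * s ∈ Icc (0 : ℝ) 1)).1
    rw [hL s ⟨hs0, by linarith⟩, pow_succ 2 n, pow_mul]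
    nlinarith

theorem ofReal_div_le_alphaEx_integrand (hGX : MapsTo G (Icc 0 1) (Icc 0 1))
    (hL : ∀ t ∈ Icc (0 : ℝ) (1 / 2), G t = G (2 * t) ^ 2 / 2) {t : ℝ}
    (ht : t ∈ Ioo (0 : ℝ) (1 / 4)) :
    ENNReal.ofReal ((1 / 8) / t) ≤ negLogbE 2 |deriv (fEx (A1 2 t)) (G (Hmap 2 t))| := by
  have htIco : t ∈ Ico (0 : ℝ) (1 / 2) := ⟨ht.1.le, by linarith [ht.2]⟩
  rw [A1_two_of_lt_half htIco, Hmap_two_of_lt_half htIco, deriv_fEx_zero]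
  obtain ⟨n, hn, hn'⟩ :=
    exists_nat_pow_near ((one_le_div (by linarith [ht.1])).2 ht.2.le) one_lt_two
  rw [div_lt_iff₀ ht.1] at hn'
  rw [le_div_iff₀ ht.1] at hn
  have h2t : 2 * t ∈ Icc (0 : ℝ) ((1 / 2) ^ (n + 1)) := by
    constructor
    · linarith [ht.1]
    · rw [div_pow, one_pow, le_div_iff₀ (by positivity), pow_succ]; nlinarith
  have hG0 := (hGX (⟨h2t.1, by linarith [ht.2]⟩ : 2 * t ∈ Icc (0 : ℝ) 1)).1
  have hGsmall : G (2 * t) ≤ ((2 : ℝ) ^ 2 ^ n)⁻¹ := by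
    have h := le_two_mul_half_pow_two_pow hGX hL (n + 1) _ h2t
    have hhalf : (1 / 2 : ℝ) ^ 2 ^ n ≤ 1 / 2 :=
      pow_le_of_le_one (by norm_num) (by norm_num) (pow_ne_zero _ two_ne_zero)
    rw [pow_succ, pow_mul] at h
    rw [← inv_pow, ← one_div]
    nlinarith [(by positivity : (0 : ℝ) < (1 / 2) ^ 2 ^ n)]
  rw [abs_of_nonneg hG0]
  calc ENNReal.ofReal ((1 / 8) / t) ≤ ((2 ^ n : ℕ) : ℝ≥0∞) := by
        rw [← ENNReal.ofReal_natCast]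
        refine ENNReal.ofReal_le_ofReal ?_
        rw [div_le_iff₀ ht.1]; push_cast; rw [pow_succ] at hn'; linarith
    _ ≤ negLogbE 2 (G (2 * t)) := natCast_le_negLogbE one_lt_two hG0 (by exact_mod_cast hGsmall)

theorem alphaEx_eq_top (hGX : MapsTo G (Icc 0 1) (Icc 0 1))
    (hL : ∀ t ∈ Icc (0 : ℝ) (1 / 2), G t = G (2 * t) ^ 2 / 2) : alphaEx G = ⊤ := by
  refine top_le_iff.1 ?_
  calc (⊤ : ℝ≥0∞) = ∫⁻ t in Ioo 0 (1 / 4), ENNReal.ofReal ((1 / 8) / t) :=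
        (setLIntegral_ofReal_div_Ioo_eq_top (by norm_num) (by norm_num)).symm
    _ ≤ ∫⁻ t in Ioo 0 (1 / 4), negLogbE 2 |deriv (fEx (A1 2 t)) (G (Hmap 2 t))| :=
        setLIntegral_mono' measurableSet_Ioo fun t ht => ofReal_div_le_alphaEx_integrand hGX hL ht
    _ ≤ alphaEx G :=
        lintegral_mono_set (Ioo_subset_Ico_self.trans (Ico_subset_Ico_right (by norm_num)))

end

theorem deRham_example_quadratic (G : ℝ → ℝ)
    (hGX : Set.MapsTo G (Set.Icc 0 1) (Set.Icc 0 1))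
    (hGeq : ∀ i : ℕ, i < 2 → ∀ t : ℝ, (i : ℝ) / 2 ≤ t → t ≤ ((i : ℝ) + 1) / 2 →
      G t = fEx i (G (2 * t - i)))
    (hG1 : G 1 = 1) :
    alphaEx G = ⊤ ∧
    ∀ᵐ t ∂(volume.restrict (Set.Ioo (0 : ℝ) 1)),
      HasDerivWithinAt G 0 (Set.Icc (0 : ℝ) 1) t := by
  have hL : ∀ t ∈ Icc (0 : ℝ) (1 / 2), G t = G (2 * t) ^ 2 / 2 := fun t ht => by
    simpa [fEx] using hGeq 0 two_pos t (by simpa using ht.1) (by simpa using ht.2)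
  have hR : ∀ t ∈ Icc (1 / 2 : ℝ) 1, G t = (G (2 * t - 1) + 1) / 2 := fun t ht => by
    simpa [fEx] using hGeq 1 one_lt_two t (by simpa using ht.1) (by norm_num [ht.2])
  have hmono : MonotoneOn G (Icc 0 1) :=
    monotoneOn_of_deRham (f₀ := fun x => x ^ 2 / 2) (f₁ := fun x => (x + 1) / 2)
      (fun x hx y _ hxy => by dsimp only; gcongr; exact hx.1)
      (fun x _ y _ hxy => by dsimp only; gcongr) (by norm_num) hGX hL hR
  exact ⟨alphaEx_eq_top hGX hL, ae_hasDerivWithinAt_zero_of_quarter_increment_le hmono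
    (quarter_increment_le hGX hL hR hG1 hmono)⟩
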